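/- In the proof of Lemma on OLS with missing variables: if c = (X_Iᵀ X_I)^{-1} X_Iᵀ X_{S_D} β_{S_D} with I ∩ S_D = ∅, then ‖P_I X_{S_D} β_{S_D}‖₂ ≤ (√n · θ_{|I|,|S_D|} / √Λ_min(|I|)) · ‖β_{S_D}‖₂ and ‖c‖₂ ≤ θ_{|I|,|S_D|}‖β_{S_D}‖₂ / Λ_min(|I|), where P_I is orthogonal projection onto the column space of X_I. -/

import Mathlib

/-! The normal equations say that `X c - X b` is orthogonal to the columns of `X` indexed by `I`,
hence to `X c`; so `‖X c‖² = ⟨X c, X b⟩ ≤ θ n ‖c‖ ‖b‖`. Comparing with the restricted eigenvalue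
bound `Λ n ‖c‖² ≤ ‖X c‖²` gives `‖c‖ ≤ θ ‖b‖ / Λ`, and substituting this back into the first
bound gives `‖X c‖² ≤ n θ² ‖b‖² / Λ`. -/

open Finset Matrix

theorem sum_mulVec_mul_eq_zero_of_support_subset {m k : Type*} [Fintype m] [Fintype k]
    {X : Matrix m k ℝ} {I : Finset k} {c : k → ℝ} {r : m → ℝ}
    (hc : ∀ j ∉ I, c j = 0) (hr : ∀ j ∈ I, ∑ i, X i j * r i = 0) :
    ∑ i, (X *ᵥ c) i * r i = 0 := by
  have hXr : ∀ j, (r ᵥ* X) j * c j = 0 := fun j => by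
    by_cases hj : j ∈ I
    · simp only [vecMul, dotProduct, mul_comm (r _), hr j hj, zero_mul]
    · rw [hc j hj, mul_zero]
  calc ∑ i, (X *ᵥ c) i * r i = r ⬝ᵥ (X *ᵥ c) := by simp only [dotProduct, mul_comm]
    _ = ∑ j, (r ᵥ* X) j * c j := dotProduct_mulVec r X c
    _ = 0 := sum_eq_zero fun j _ => hXr j

theorem sum_sq_mulVec_eq_of_normal {m k : Type*} [Fintype m] [Fintype k]
    {X : Matrix m k ℝ} {I : Finset k} {b c : k → ℝ} (hc : ∀ j ∉ I, c j = 0)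
    (hnormal : ∀ j ∈ I, ∑ i, X i j * ((X *ᵥ c) i - (X *ᵥ b) i) = 0) :
    ∑ i, (X *ᵥ c) i ^ 2 = ∑ i, (X *ᵥ c) i * (X *ᵥ b) i := by
  have h := sum_mulVec_mul_eq_zero_of_support_subset hc hnormal
  simp only [mul_sub, sum_sub_distrib, ← sq] at h
  linarith

theorem le_div_of_mul_sq_le_mul {a b x : ℝ} (ha : 0 < a) (hb : 0 ≤ b) (hx : 0 ≤ x)
    (h : a * x ^ 2 ≤ b * x) : x ≤ b / a := by
  rcases hx.eq_or_lt with rfl | hx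
  · positivity
  · rw [le_div_iff₀ ha]
    nlinarith

theorem stmt6_general (n p : ℕ) (X : Matrix (Fin n) (Fin p) ℝ)
    (I SD : Finset (Fin p))
    (θ Λmin : ℝ) (hΛmin : 0 < Λmin) (hθ0 : 0 ≤ θ) (hn : 0 < n)
    (hRE : ∀ v : Fin p → ℝ, (∀ j ∉ I, v j = 0) →
      Λmin * n * (∑ j, (v j) ^ 2) ≤ ∑ i, (X.mulVec v i) ^ 2)
    (hθ : ∀ u v : Fin p → ℝ, (∀ j ∉ I, u j = 0) → (∀ j ∉ SD, v j = 0) →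
      |∑ i, (X.mulVec u i) * (X.mulVec v i)| ≤
        θ * n * Real.sqrt (∑ j, (u j) ^ 2) * Real.sqrt (∑ j, (v j) ^ 2))
    (b : Fin p → ℝ) (hb : ∀ j ∉ SD, b j = 0)
    (c : Fin p → ℝ) (hc : ∀ j ∉ I, c j = 0)
    (hnormal : ∀ j ∈ I, ∑ i, X i j * (X.mulVec c i - X.mulVec b i) = 0) :
    Real.sqrt (∑ i, (X.mulVec c i) ^ 2) ≤
      Real.sqrt (n : ℝ) * θ / Real.sqrt Λmin * Real.sqrt (∑ j, (b j) ^ 2) ∧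
    Real.sqrt (∑ j, (c j) ^ 2) ≤ θ * Real.sqrt (∑ j, (b j) ^ 2) / Λmin := by
  set nc := Real.sqrt (∑ j, (c j) ^ 2)
  set nb := Real.sqrt (∑ j, (b j) ^ 2)
  have hn' : (0 : ℝ) < n := by exact_mod_cast hn
  have hupper : ∑ i, (X *ᵥ c) i ^ 2 ≤ θ * n * nb * nc := by
    rw [sum_sq_mulVec_eq_of_normal hc hnormal]
    linarith [le_abs_self (∑ i, (X *ᵥ c) i * (X *ᵥ b) i), hθ c b hc hb]
  have hlower : Λmin * n * nc ^ 2 ≤ ∑ i, (X *ᵥ c) i ^ 2 := by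
    rw [Real.sq_sqrt (by positivity)]
    exact hRE c hc
  have hcoef : nc ≤ θ * nb / Λmin := by
    have := le_div_of_mul_sq_le_mul (by positivity) (by positivity) (Real.sqrt_nonneg _)
      (hlower.trans hupper)
    rwa [mul_right_comm θ, mul_div_mul_right _ _ hn'.ne'] at this
  refine ⟨Real.sqrt_le_left (by positivity) |>.mpr ?_, hcoef⟩
  calc ∑ i, (X *ᵥ c) i ^ 2 ≤ θ * n * nb * (θ * nb / Λmin) :=
        hupper.trans (mul_le_mul_of_nonneg_left hcoef (by positivity))
    _ = (Real.sqrt n * θ / Real.sqrt Λmin * nb) ^ 2 := by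
        rw [mul_pow, div_pow, mul_pow, Real.sq_sqrt hn'.le, Real.sq_sqrt hΛmin.le]
        ring

/-- Bounds on the projection of the dropped signal onto the column space of
X_I, where X c = P_I X_{S_D} β_{S_D}. -/
theorem stmt6 (n p : ℕ) (X : Matrix (Fin n) (Fin p) ℝ)
    (I SD : Finset (Fin p)) (hdisj : Disjoint I SD)
    (θ Λmin : ℝ) (hΛmin : 0 < Λmin) (hθ0 : 0 ≤ θ) (hn : 0 < n)
    (hRE : ∀ v : Fin p → ℝ, (∀ j ∉ I, v j = 0) →
      Λmin * n * (∑ j, (v j) ^ 2) ≤ ∑ i, (X.mulVec v i) ^ 2)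
    (hθ : ∀ u v : Fin p → ℝ, (∀ j ∉ I, u j = 0) → (∀ j ∉ SD, v j = 0) →
      |∑ i, (X.mulVec u i) * (X.mulVec v i)| ≤
        θ * n * Real.sqrt (∑ j, (u j) ^ 2) * Real.sqrt (∑ j, (v j) ^ 2))
    (b : Fin p → ℝ) (hb : ∀ j ∉ SD, b j = 0)
    (c : Fin p → ℝ) (hc : ∀ j ∉ I, c j = 0)
    (hnormal : ∀ j ∈ I, ∑ i, X i j * (X.mulVec c i - X.mulVec b i) = 0) :
    Real.sqrt (∑ i, (X.mulVec c i) ^ 2) ≤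
      Real.sqrt (n : ℝ) * θ / Real.sqrt Λmin * Real.sqrt (∑ j, (b j) ^ 2) ∧
    Real.sqrt (∑ j, (c j) ^ 2) ≤ θ * Real.sqrt (∑ j, (b j) ^ 2) / Λmin :=
  stmt6_general n p X I SD θ Λmin hΛmin hθ0 hn hRE hθ b hb c hc hnormal
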